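/- arXiv:math/0604472 — 2 statements merged into one kernel-verified Lean document; each statement's English description precedes it below -/
import Mathlib

section
/- The function N(t) = N₀ t^(μ−1) E^{γ+1}_{ν,μ}(−c^ν t^ν) solves the fractional integral equation N(t) − N₀ t^(μ−1) E^γ_{ν,μ}(−c^ν t^ν) = −c^ν (₀D_t^(−ν) N)(t) for t > 0. -/
/-!
The Riemann–Liouville integral `I^ν` acts termwise on the Prabhakar series: by the Beta integral,
`I^ν u^(β-1) = Γ(β) / Γ(β + ν) · t^(β+ν-1)`, hence
`I^ν [u^(μ-1) E^γ_{ν,μ}(a u^ν)] = t^(μ+ν-1) E^γ_{ν,μ+ν}(a t^ν)`; the exchange of sum and integral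
is justified by absolute convergence, which follows from the ratio test since
`Γ(x + ν) / Γ(x) → ∞`. On the other side, `(γ+1)_(k+1) - (γ)_(k+1) = (k+1) (γ+1)_k` gives
`E^(γ+1)_{ν,μ}(z) - E^γ_{ν,μ}(z) = z E^(γ+1)_{ν,μ+ν}(z)`, and for `z = -c^ν t^ν` both sides of
the equation become `-c^ν N₀ t^(μ+ν-1) E^(γ+1)_{ν,μ+ν}(-c^ν t^ν)`.
-/

open MeasureTheory Real Set intervalIntegral Filter

namespace Real

theorem rpow_mul_Gamma_le_Gamma_add {s x : ℝ} (hs0 : 0 < s) (hs1 : s ≤ 1) (hx : 1 < x + s) :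
    (x + s - 1) ^ s * Gamma x ≤ Gamma (x + s) := by
  set y := x + s - 1 with hy_def
  have hy : 0 < y := by linarith
  have hGy : Gamma (x + s) = y * Gamma y := by
    rw [← Gamma_add_one hy.ne', hy_def, sub_add_cancel]
  -- `x` is the convex combination `(1 - s) (x + s) + s y`, so log-convexity of `Γ` applies
  have hconv := convexOn_log_Gamma.2 (mem_Ioi.2 (by linarith : 0 < x + s)) (mem_Ioi.2 hy)
    (sub_nonneg.2 hs1) hs0.le (sub_add_cancel 1 s)
  rw [show (1 - s) • (x + s) + s • y = x by simp only [smul_eq_mul, hy_def]; ring] at hconv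
  simp only [Function.comp_apply, smul_eq_mul, hGy,
    log_mul hy.ne' (Gamma_pos_of_pos hy).ne'] at hconv
  have hGx : 0 < Gamma x := Gamma_pos_of_pos (by linarith)
  rw [← log_le_log_iff (by positivity) (by positivity), hGy,
    log_mul (by positivity) hGx.ne', log_rpow hy,
    log_mul hy.ne' (Gamma_pos_of_pos hy).ne']
  linarith

theorem tendsto_Gamma_add_div_Gamma_atTop {ν : ℝ} (hν : 0 < ν) :
    Tendsto (fun x => Gamma (x + ν) / Gamma x) atTop atTop := by
  set s := min ν 1
  have hs0 : 0 < s := lt_min hν one_pos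
  have hlow : Tendsto (fun x : ℝ => (x + s - 1) ^ s) atTop atTop :=
    (tendsto_rpow_atTop hs0).comp (tendsto_atTop_add_const_right _ (-1)
      (tendsto_atTop_add_const_right _ s tendsto_id))
  refine tendsto_atTop_mono' _ ?_ hlow
  filter_upwards [eventually_ge_atTop 2] with x hx
  rw [le_div_iff₀ (Gamma_pos_of_pos (by linarith))]
  calc (x + s - 1) ^ s * Gamma x ≤ Gamma (x + s) :=
        rpow_mul_Gamma_le_Gamma_add hs0 (min_le_right _ _) (by linarith)
    _ ≤ Gamma (x + ν) := Gamma_strictMonoOn_Ici.monotoneOn (mem_Ici.2 (by linarith))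
        (mem_Ici.2 (by linarith [min_le_left ν 1])) (by linarith [min_le_left ν 1])

theorem intervalIntegrable_rpow_mul_sub_rpow {a b t : ℝ} (ha : 0 < a) (hb : 0 < b) (ht : 0 < t) :
    IntervalIntegrable (fun u : ℝ => u ^ (a - 1) * (t - u) ^ (b - 1)) volume 0 t := by
  -- each factor is singular at one endpoint only; the right half is the left one reflected
  have left : ∀ {p q : ℝ}, 0 < p →
      IntervalIntegrable (fun u : ℝ => u ^ (p - 1) * (t - u) ^ (q - 1)) volume 0 (t / 2) := by
    intro p q hp
    refine (intervalIntegrable_rpow' (by linarith)).mul_continuousOn fun u hu => ?_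
    rw [uIcc_of_le (by linarith)] at hu
    have hne : t - u ≠ 0 := by linarith [hu.2]
    exact ((continuous_const.sub continuous_id).continuousAt.rpow_const
      (Or.inl hne)).continuousWithinAt
  have right : IntervalIntegrable
      (fun u : ℝ => u ^ (a - 1) * (t - u) ^ (b - 1)) volume (t / 2) t := by
    have := ((left (q := a) hb).comp_sub_left t).symm
    simp only [sub_sub_cancel, sub_zero, sub_half] at this
    exact this.congr fun u _ => mul_comm _ _
  exact (left ha).trans right

theorem integral_rpow_mul_sub_rpow {a b t : ℝ} (ha : 0 < a) (hb : 0 < b) (ht : 0 < t) :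
    ∫ u in (0 : ℝ)..t, u ^ (a - 1) * (t - u) ^ (b - 1) =
      Gamma a * Gamma b / Gamma (a + b) * t ^ (a + b - 1) := by
  have hΓ : Complex.Gamma (a + b) ≠ 0 := by
    rw [← Complex.ofReal_add, Complex.Gamma_ofReal]
    exact_mod_cast (Gamma_pos_of_pos (add_pos ha hb)).ne'
  have hβ : Complex.betaIntegral a b =
      Complex.Gamma a * Complex.Gamma b / Complex.Gamma (a + b) := by
    rw [eq_div_iff hΓ, mul_comm, Complex.Gamma_mul_Gamma_eq_betaIntegral (by simpa using ha)
      (by simpa using hb)]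
  apply Complex.ofReal_injective
  calc ((∫ u in (0 : ℝ)..t, u ^ (a - 1) * (t - u) ^ (b - 1) : ℝ) : ℂ)
      = ∫ u in (0 : ℝ)..t, (u : ℂ) ^ ((a : ℂ) - 1) * ((t : ℂ) - u) ^ ((b : ℂ) - 1) := by
        rw [← intervalIntegral.integral_ofReal]
        refine intervalIntegral.integral_congr fun u hu => ?_
        rw [uIcc_of_le ht.le] at hu
        push_cast [Complex.ofReal_cpow hu.1, Complex.ofReal_cpow (sub_nonneg.2 hu.2)]
        rfl
    _ = (t : ℂ) ^ ((a : ℂ) + b - 1) * Complex.betaIntegral a b :=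
        Complex.betaIntegral_scaled a b ht
    _ = _ := by
        rw [hβ]
        push_cast [Complex.ofReal_cpow ht.le, ← Complex.Gamma_ofReal]
        ring

theorem rpow_mul_rpow_pow {u : ℝ} (hu : 0 < u) (a b : ℝ) (k : ℕ) :
    u ^ a * (u ^ b) ^ k = u ^ (a + k * b) := by
  rw [← rpow_natCast, ← rpow_mul hu.le, ← rpow_add hu, mul_comm b]

end Real

theorem integral_tsum_mul_of_nonneg {α : Type*} [MeasurableSpace α] {m : Measure α}
    {c : ℕ → ℝ} {G : ℕ → α → ℝ} (hG : ∀ k, Integrable (G k) m) (hG0 : ∀ k, 0 ≤ᵐ[m] G k)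
    (hsum : Summable fun k => ‖c k‖ * ∫ x, G k x ∂m) :
    ∫ x, ∑' k, c k * G k x ∂m = ∑' k, c k * ∫ x, G k x ∂m := by
  have hnorm : ∀ k, ∫ x, ‖c k * G k x‖ ∂m = ‖c k‖ * ∫ x, G k x ∂m := fun k => by
    rw [← MeasureTheory.integral_const_mul]
    refine integral_congr_ae ((hG0 k).mono fun x hx => ?_)
    simp only [norm_mul, Real.norm_of_nonneg (show 0 ≤ G k x from hx)]
  rw [← integral_tsum_of_summable_integral_norm (fun k => (hG k).const_mul (c k))
    (by simpa only [hnorm] using hsum)]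
  simp only [MeasureTheory.integral_const_mul]

noncomputable def prabhakarTerm (γ ν μ z : ℝ) (k : ℕ) : ℝ :=
  (ascPochhammer ℝ k).eval γ * z ^ k / (k.factorial * Gamma (μ + k * ν))

noncomputable def prabhakar (γ ν μ z : ℝ) : ℝ := ∑' k : ℕ, prabhakarTerm γ ν μ z k

noncomputable def riemannLiouvilleIntegral (ν : ℝ) (f : ℝ → ℝ) (t : ℝ) : ℝ :=
  1 / Gamma ν * ∫ u in (0 : ℝ)..t, (t - u) ^ (ν - 1) * f u

section Prabhakar

variable {γ ν μ z : ℝ}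

theorem prabhakarTerm_succ {k : ℕ} (hΓ : Gamma (μ + k * ν) ≠ 0) :
    prabhakarTerm γ ν μ z (k + 1) =
      prabhakarTerm γ ν μ z k *
        ((γ + k) * z / (k + 1) * (Gamma (μ + k * ν) / Gamma (μ + k * ν + ν))) := by
  simp only [prabhakarTerm, ascPochhammer_succ_eval, pow_succ, Nat.factorial_succ]
  push_cast
  rw [show μ + (k + 1) * ν = μ + k * ν + ν by ring]
  field_simp

variable (γ μ z) in
theorem summable_norm_prabhakarTerm (hν : 0 < ν) :
    Summable fun k => ‖prabhakarTerm γ ν μ z k‖ := by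
  refine summable_of_ratio_norm_eventually_le (r := 1 / 2) (by norm_num) ?_
  have hx : Tendsto (fun k : ℕ => μ + k * ν) atTop atTop :=
    tendsto_atTop_add_const_left _ _ (tendsto_natCast_atTop_atTop.atTop_mul_const hν)
  filter_upwards [hx.eventually ((tendsto_Gamma_add_div_Gamma_atTop hν).eventually_ge_atTop
    (2 * (|γ| + 1) * |z|)), hx.eventually (eventually_gt_atTop 0)] with k hratio hpos
  have hΓ := Gamma_pos_of_pos hpos
  have hΓν : 0 < Gamma (μ + k * ν + ν) := Gamma_pos_of_pos (by linarith)
  rw [le_div_iff₀ hΓ] at hratio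
  have hγk : |γ + k| ≤ (|γ| + 1) * (k + 1) := by
    have := abs_add_le γ k
    rw [Nat.abs_cast] at this
    nlinarith [abs_nonneg γ, (Nat.cast_nonneg k : (0 : ℝ) ≤ k)]
  rw [norm_norm, norm_norm, prabhakarTerm_succ hΓ.ne', norm_mul, mul_comm (1 / 2)]
  refine mul_le_mul_of_nonneg_left ?_ (norm_nonneg _)
  rw [norm_mul, norm_div, norm_div, norm_mul, Real.norm_of_nonneg (by positivity : (0 : ℝ) ≤ k + 1),
    Real.norm_of_nonneg hΓ.le, Real.norm_of_nonneg hΓν.le, Real.norm_eq_abs, Real.norm_eq_abs,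
    div_mul_div_comm, div_le_iff₀ (by positivity)]
  calc |γ + k| * |z| * Gamma (μ + k * ν) ≤ (|γ| + 1) * (k + 1) * |z| * Gamma (μ + k * ν) := by
        gcongr
    _ ≤ 1 / 2 * ((k + 1) * Gamma (μ + k * ν + ν)) := by nlinarith [abs_nonneg z]

variable (γ μ z) in
theorem summable_prabhakarTerm (hν : 0 < ν) : Summable (prabhakarTerm γ ν μ z) :=
  (summable_norm_prabhakarTerm γ μ z hν).of_norm

theorem prabhakarTerm_mul_pow (z w : ℝ) (k : ℕ) :
    prabhakarTerm γ ν μ (z * w) k = prabhakarTerm γ ν μ z k * w ^ k := by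
  rw [prabhakarTerm, prabhakarTerm, mul_pow]
  ring

theorem prabhakarTerm_mul_Gamma_div {z : ℝ} {k : ℕ} (hΓ : Gamma (μ + k * ν) ≠ 0) :
    prabhakarTerm γ ν μ z k * (Gamma (μ + k * ν) / Gamma (μ + k * ν + ν)) =
      prabhakarTerm γ ν (μ + ν) z k := by
  rw [prabhakarTerm, prabhakarTerm, show μ + ν + k * ν = μ + k * ν + ν by ring]
  field_simp

theorem prabhakarTerm_succ_sub_prabhakarTerm (k : ℕ) :
    prabhakarTerm (γ + 1) ν μ z (k + 1) - prabhakarTerm γ ν μ z (k + 1) =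
      z * prabhakarTerm (γ + 1) ν (μ + ν) z k := by
  have hA : (ascPochhammer ℝ (k + 1)).eval (γ + 1) =
      (ascPochhammer ℝ k).eval (γ + 1) * (γ + 1 + k) := ascPochhammer_succ_eval k _
  have hB : (ascPochhammer ℝ (k + 1)).eval γ = γ * (ascPochhammer ℝ k).eval (γ + 1) := by
    simp [ascPochhammer_succ_left]
  simp only [prabhakarTerm, hA, hB, pow_succ, Nat.factorial_succ]
  push_cast
  rw [show μ + (k + 1) * ν = μ + ν + k * ν by ring]
  field_simp
  ring

theorem prabhakar_succ_sub_prabhakar (hν : 0 < ν) :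
    prabhakar (γ + 1) ν μ z - prabhakar γ ν μ z = z * prabhakar (γ + 1) ν (μ + ν) z := by
  have h₁ := summable_prabhakarTerm (γ + 1) μ z hν
  have h₀ := summable_prabhakarTerm γ μ z hν
  have h0 : prabhakarTerm (γ + 1) ν μ z 0 - prabhakarTerm γ ν μ z 0 = 0 := by
    simp [prabhakarTerm]
  rw [prabhakar, prabhakar, prabhakar, ← h₁.tsum_sub h₀, (h₁.sub h₀).tsum_eq_zero_add, h0,
    zero_add, ← tsum_mul_left]
  exact tsum_congr prabhakarTerm_succ_sub_prabhakarTerm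

end Prabhakar

section RiemannLiouville

variable {ν μ : ℝ}

theorem riemannLiouvilleIntegral_congr {f g : ℝ → ℝ} {t : ℝ} (ht : 0 ≤ t)
    (h : EqOn f g (Ioc 0 t)) :
    riemannLiouvilleIntegral ν f t = riemannLiouvilleIntegral ν g t := by
  rw [riemannLiouvilleIntegral, riemannLiouvilleIntegral]
  congr 1
  refine intervalIntegral.integral_congr_ae (Eventually.of_forall fun u hu => ?_)
  rw [uIoc_of_le ht] at hu
  rw [h hu]

theorem riemannLiouvilleIntegral_const_mul (a : ℝ) (f : ℝ → ℝ) (t : ℝ) :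
    riemannLiouvilleIntegral ν (fun u => a * f u) t = a * riemannLiouvilleIntegral ν f t := by
  simp only [riemannLiouvilleIntegral, mul_left_comm _ a, intervalIntegral.integral_const_mul]

theorem riemannLiouvilleIntegral_rpow_mul_prabhakar (γ a : ℝ) {t : ℝ} (hμ : 0 < μ) (hν : 0 < ν)
    (ht : 0 < t) :
    riemannLiouvilleIntegral ν (fun u => u ^ (μ - 1) * prabhakar γ ν μ (a * u ^ ν)) t =
      t ^ (μ + ν - 1) * prabhakar γ ν (μ + ν) (a * t ^ ν) := by
  set G : ℕ → ℝ → ℝ := fun k u => u ^ (μ + k * ν - 1) * (t - u) ^ (ν - 1)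
  have hpos : ∀ k : ℕ, 0 < μ + k * ν := fun k => by positivity
  have hG0 : ∀ k, ∀ u ∈ Ioc 0 t, 0 ≤ G k u := fun k u hu =>
    mul_nonneg (rpow_nonneg hu.1.le _) (rpow_nonneg (sub_nonneg.2 hu.2) _)
  have hGint : ∀ k, ∫ u in Ioc 0 t, G k u =
      Gamma (μ + k * ν) * Gamma ν / Gamma (μ + k * ν + ν) * t ^ (μ + k * ν + ν - 1) := fun k => by
    rw [← integral_of_le ht.le]
    exact integral_rpow_mul_sub_rpow (hpos k) hν ht
  have hterm : ∀ k, prabhakarTerm γ ν μ a k * ∫ u in Ioc 0 t, G k u =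
      Gamma ν * (t ^ (μ + ν - 1) * prabhakarTerm γ ν (μ + ν) (a * t ^ ν) k) := fun k => by
    rw [hGint, prabhakarTerm_mul_pow,
      ← prabhakarTerm_mul_Gamma_div (Gamma_pos_of_pos (hpos k)).ne',
      show t ^ (μ + k * ν + ν - 1) = t ^ (μ + ν - 1) * (t ^ ν) ^ k by
        rw [rpow_mul_rpow_pow ht]; ring_nf]
    ring
  have hexpand : EqOn (fun u => (t - u) ^ (ν - 1) * (u ^ (μ - 1) * prabhakar γ ν μ (a * u ^ ν)))
      (fun u => ∑' k, prabhakarTerm γ ν μ a k * G k u) (Ioc 0 t) := fun u hu => by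
    simp only [prabhakar, prabhakarTerm_mul_pow, ← tsum_mul_left]
    refine tsum_congr fun k => ?_
    simp only [G]
    rw [show μ + k * ν - 1 = μ - 1 + k * ν by ring, ← rpow_mul_rpow_pow hu.1]
    ring
  have hsum : Summable fun k => ‖prabhakarTerm γ ν μ a k‖ * ∫ u in Ioc 0 t, G k u := by
    refine ((summable_norm_prabhakarTerm γ (μ + ν) (a * t ^ ν) hν).mul_left
      (Gamma ν * t ^ (μ + ν - 1))).congr fun k => ?_
    rw [← Real.norm_of_nonneg (setIntegral_nonneg measurableSet_Ioc (hG0 k)), ← norm_mul, hterm,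
      norm_mul, norm_mul, Real.norm_of_nonneg (Gamma_pos_of_pos hν).le,
      Real.norm_of_nonneg (rpow_nonneg ht.le _)]
    ring
  have hGi : ∀ k, IntegrableOn (G k) (Ioc 0 t) := fun k =>
    (intervalIntegrable_iff_integrableOn_Ioc_of_le ht.le).1
      (intervalIntegrable_rpow_mul_sub_rpow (hpos k) hν ht)
  rw [riemannLiouvilleIntegral, integral_of_le ht.le,
    setIntegral_congr_fun measurableSet_Ioc hexpand,
    integral_tsum_mul_of_nonneg hGi (fun k => ae_restrict_of_forall_mem measurableSet_Ioc (hG0 k))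
      hsum,
    tsum_congr hterm, tsum_mul_left, tsum_mul_left, prabhakar]
  field_simp [(Gamma_pos_of_pos hν).ne']

end RiemannLiouville

theorem prabhakar_solves_fractional_integral_equation_general
    (μ ν c γ N₀ : ℝ) (hμ : 0 < μ) (hν : 0 < ν)
    (N : ℝ → ℝ)
    (hN : ∀ t : ℝ, 0 < t →
      N t = N₀ * t ^ (μ - 1) *
        ∑' k : ℕ, (ascPochhammer ℝ k).eval (γ + 1) * (-(c ^ ν * t ^ ν)) ^ k /
          (k.factorial * Real.Gamma (μ + k * ν))) :
    ∀ t : ℝ, 0 < t →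
      N t - N₀ * t ^ (μ - 1) *
          (∑' k : ℕ, (ascPochhammer ℝ k).eval γ * (-(c ^ ν * t ^ ν)) ^ k /
            (k.factorial * Real.Gamma (μ + k * ν)))
        = -c ^ ν * ((1 / Real.Gamma ν) * ∫ u in (0 : ℝ)..t, (t - u) ^ (ν - 1) * N u) := by
  intro t ht
  change N t - N₀ * t ^ (μ - 1) * prabhakar γ ν μ (-(c ^ ν * t ^ ν)) =
    -c ^ ν * riemannLiouvilleIntegral ν N t
  have hN' : EqOn N (fun u => N₀ * (u ^ (μ - 1) * prabhakar (γ + 1) ν μ (-c ^ ν * u ^ ν)))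
      (Ioc 0 t) := fun u hu => by
    dsimp only
    rw [hN u hu.1, mul_assoc, neg_mul]
    rfl
  rw [riemannLiouvilleIntegral_congr ht.le hN', riemannLiouvilleIntegral_const_mul,
    riemannLiouvilleIntegral_rpow_mul_prabhakar _ _ hμ hν ht, hN t ht]
  change N₀ * t ^ (μ - 1) * prabhakar (γ + 1) ν μ (-(c ^ ν * t ^ ν)) - _ = _
  rw [← mul_sub, prabhakar_succ_sub_prabhakar hν, show μ + ν - 1 = μ - 1 + ν by ring, rpow_add ht]
  simp only [neg_mul]
  ring

theorem prabhakar_solves_fractional_integral_equation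
    (μ ν c γ N₀ : ℝ) (hμ : 0 < μ) (hν : 0 < ν) (hc : 0 < c) (hγ : 0 < γ)
    (N : ℝ → ℝ)
    (hN : ∀ t : ℝ, 0 < t →
      N t = N₀ * t ^ (μ - 1) *
        ∑' k : ℕ, (ascPochhammer ℝ k).eval (γ + 1) * (-(c ^ ν * t ^ ν)) ^ k /
          (k.factorial * Real.Gamma (μ + k * ν))) :
    ∀ t : ℝ, 0 < t →
      N t - N₀ * t ^ (μ - 1) *
          (∑' k : ℕ, (ascPochhammer ℝ k).eval γ * (-(c ^ ν * t ^ ν)) ^ k /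
            (k.factorial * Real.Gamma (μ + k * ν)))
        = -c ^ ν * ((1 / Real.Gamma ν) * ∫ u in (0 : ℝ)..t, (t - u) ^ (ν - 1) * N u) :=
  prabhakar_solves_fractional_integral_equation_general μ ν c γ N₀ hμ hν N hN
end

section
/- The Laplace transform of a function whose Laplace transform equals Γ(ν)/(p^ν + c^ν) is realized by N(t) = N₀ Γ(ν) t^(ν−1) E_{ν,ν}(−c^ν t^ν): namely ∫₀^∞ e^(−pt) t^(ν−1) E_{ν,ν}(−c^ν t^ν) dt = 1/(p^ν + c^ν) for p > c. -/
/-!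
Expanding the Mittag-Leffler function, the `k`-th term of the integrand is a multiple of
`t ^ (β + k α - 1) e^{-p t}`, whose integral `Γ(β + k α) / p ^ (β + k α)` cancels the Gamma factor
of the series. The transform is therefore the geometric series `∑ (a / p ^ α) ^ k / p ^ β`, and the
interchange of sum and integral is justified because the same computation with `|a|` in place of
`a` bounds the integrals of the absolute values by a convergent geometric series.
-/

open MeasureTheory Real Set

/-- `mittagLeffler α β` is `E_{α,β}`. -/
noncomputable def mittagLeffler (α β z : ℝ) : ℝ :=
  ∑' k : ℕ, z ^ k / Gamma (β + k * α)

lemma integrableOn_rpow_sub_one_mul_exp_neg_mul_Ioi {s r : ℝ} (hs : 0 < s) (hr : 0 < r) :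
    IntegrableOn (fun t : ℝ => t ^ (s - 1) * exp (-(r * t))) (Ioi 0) :=
  .of_integral_ne_zero <| by rw [integral_rpow_mul_exp_neg_mul_Ioi hs hr]; positivity

section LaplaceTerm

variable {α β p : ℝ} (a : ℝ) (k : ℕ)

lemma exp_neg_mul_mul_rpow_mul_pow_div_Gamma {t : ℝ} (ht : 0 < t) :
    exp (-p * t) * (t ^ (β - 1) * ((a * t ^ α) ^ k / Gamma (β + k * α)))
      = a ^ k / Gamma (β + k * α) * (t ^ (β + k * α - 1) * exp (-(p * t))) := by
  have hpow : t ^ (β + k * α - 1) = t ^ (β - 1) * (t ^ α) ^ k := by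
    rw [← rpow_mul_natCast ht.le, ← rpow_add ht]; ring_nf
  rw [hpow, mul_pow, neg_mul]; ring

lemma norm_exp_neg_mul_mul_rpow_mul_pow_div_Gamma (hβ : 0 < β) (hα : 0 ≤ α) {t : ℝ}
    (ht : 0 < t) :
    ‖exp (-p * t) * (t ^ (β - 1) * ((a * t ^ α) ^ k / Gamma (β + k * α)))‖
      = exp (-p * t) * (t ^ (β - 1) * ((|a| * t ^ α) ^ k / Gamma (β + k * α))) := by
  have hΓ : 0 < Gamma (β + k * α) := Gamma_pos_of_pos (by positivity)
  rw [norm_mul, norm_mul, norm_div, norm_pow, norm_mul, norm_of_nonneg (exp_pos _).le,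
    norm_of_nonneg (rpow_pos_of_pos ht _).le, norm_of_nonneg (rpow_pos_of_pos ht _).le,
    norm_of_nonneg hΓ.le, Real.norm_eq_abs]

lemma integrableOn_exp_neg_mul_mul_rpow_mul_pow_div_Gamma (hβ : 0 < β) (hα : 0 ≤ α)
    (hp : 0 < p) :
    IntegrableOn
      (fun t => exp (-p * t) * (t ^ (β - 1) * ((a * t ^ α) ^ k / Gamma (β + k * α)))) (Ioi 0) :=
  IntegrableOn.congr_fun
    ((integrableOn_rpow_sub_one_mul_exp_neg_mul_Ioi (by positivity) hp).const_mul _) (fun _ ht =>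
      (exp_neg_mul_mul_rpow_mul_pow_div_Gamma a k ht).symm) measurableSet_Ioi

lemma integral_exp_neg_mul_mul_rpow_mul_pow_div_Gamma (hβ : 0 < β) (hα : 0 ≤ α) (hp : 0 < p) :
    ∫ t in Ioi 0, exp (-p * t) * (t ^ (β - 1) * ((a * t ^ α) ^ k / Gamma (β + k * α)))
      = (a / p ^ α) ^ k / p ^ β := by
  have hΓ : Gamma (β + k * α) ≠ 0 := (Gamma_pos_of_pos (by positivity)).ne'
  rw [setIntegral_congr_fun measurableSet_Ioi
      (fun _ ht => exp_neg_mul_mul_rpow_mul_pow_div_Gamma a k ht), integral_const_mul,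
    integral_rpow_mul_exp_neg_mul_Ioi (by positivity) hp, one_div, inv_rpow hp.le,
    rpow_add hp, mul_comm (k : ℝ), rpow_mul_natCast hp.le, div_pow]
  field_simp

end LaplaceTerm

theorem integral_exp_neg_mul_mul_rpow_mul_mittagLeffler {α β p a : ℝ} (hβ : 0 < β) (hα : 0 ≤ α)
    (hp : 0 < p) (ha : |a| < p ^ α) :
    ∫ t in Ioi 0, exp (-p * t) * (t ^ (β - 1) * mittagLeffler α β (a * t ^ α))
      = (1 - a / p ^ α)⁻¹ / p ^ β := by
  have hpα : 0 < p ^ α := rpow_pos_of_pos hp α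
  have hnorm (k : ℕ) : ∫ t in Ioi 0,
      ‖exp (-p * t) * (t ^ (β - 1) * ((a * t ^ α) ^ k / Gamma (β + k * α)))‖
        = (|a| / p ^ α) ^ k / p ^ β := by
    rw [setIntegral_congr_fun measurableSet_Ioi
      (fun _ ht => norm_exp_neg_mul_mul_rpow_mul_pow_div_Gamma a k hβ hα ht),
      integral_exp_neg_mul_mul_rpow_mul_pow_div_Gamma _ _ hβ hα hp]
  have hsum : Summable fun k : ℕ => ∫ t in Ioi 0,
      ‖exp (-p * t) * (t ^ (β - 1) * ((a * t ^ α) ^ k / Gamma (β + k * α)))‖ := by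
    simp_rw [hnorm]
    exact (summable_geometric_of_lt_one (by positivity) ((div_lt_one hpα).2 ha)).div_const _
  calc ∫ t in Ioi 0, exp (-p * t) * (t ^ (β - 1) * mittagLeffler α β (a * t ^ α))
      = ∫ t in Ioi 0, ∑' k : ℕ,
          exp (-p * t) * (t ^ (β - 1) * ((a * t ^ α) ^ k / Gamma (β + k * α))) := by
        simp only [mittagLeffler, tsum_mul_left]
    _ = ∑' k : ℕ, (a / p ^ α) ^ k / p ^ β := by
        rw [← integral_tsum_of_summable_integral_norm
          (fun k => integrableOn_exp_neg_mul_mul_rpow_mul_pow_div_Gamma a k hβ hα hp) hsum]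
        simp_rw [integral_exp_neg_mul_mul_rpow_mul_pow_div_Gamma _ _ hβ hα hp]
    _ = (1 - a / p ^ α)⁻¹ / p ^ β := by
        rw [tsum_div_const, tsum_geometric_of_abs_lt_one]
        rwa [abs_div, abs_of_pos hpα, div_lt_one hpα]

theorem F_function_laplace_transform
    (c ν p : ℝ) (hc : 0 < c) (hν : 0 < ν) (hp : c < p) :
    ∫ t in Ioi (0 : ℝ),
        Real.exp (-p * t) *
          (t ^ (ν - 1) * ∑' k : ℕ, (-(c ^ ν * t ^ ν)) ^ k / Real.Gamma (ν + k * ν))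
      = 1 / (p ^ ν + c ^ ν) := by
  have hcν : 0 < c ^ ν := rpow_pos_of_pos hc ν
  have hpν : 0 < p ^ ν := rpow_pos_of_pos (hc.trans hp) ν
  have ha : |-c ^ ν| < p ^ ν := by rw [abs_neg, abs_of_pos hcν]; exact rpow_lt_rpow hc.le hp hν
  simp_rw [← neg_mul]
  refine (integral_exp_neg_mul_mul_rpow_mul_mittagLeffler hν hν.le (hc.trans hp) ha).trans ?_
  rw [neg_div, sub_neg_eq_add]
  field_simp
end
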